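/- arXiv:1502.06094 — 2 statements merged into one kernel-verified Lean document; each statement's English description precedes it below -/
import Mathlib

section
/- Let I be partitioned into disjoint sets σ₁ and σ₂ with |σ₁| ≥ 2 and |σ₂| ≥ 2, and let B be the monotone-regular behavior with single output neuron x defined by the language L = {⟨σ₁⟩, ⟨σ₂⟩}: x ∈ B(α) iff α embeds ⟨σ₁⟩ or ⟨σ₂⟩. Then no positive neural network implements B with zero delay. -/
open scoped Classical

/-- A positive neural network with input neurons `I`, output neurons `O` and auxiliary
neurons `A`. Connections go from `I ⊕ A` (presynaptic) to `O ⊕ A` (postsynaptic); all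
weights are in `[0,1]`, weight `0` represents a missing connection, and there are no
self-connections on auxiliary neurons. -/
structure PNN (I O A : Type) [Fintype I] [Fintype O] [Fintype A] where
  W : (I ⊕ A) → (O ⊕ A) → ℝ
  nonneg : ∀ z y, 0 ≤ W z y
  le_one : ∀ z y, W z y ≤ 1
  no_self : ∀ a : A, W (Sum.inr a) (Sum.inr a) = 0

variable {I O A : Type} [Fintype I] [Fintype O] [Fintype A]

/-- Total incoming weight of neuron `y` given the set `S` of currently activated
(output and auxiliary) neurons and the input symbol `σ`. -/
noncomputable def PNN.inWeight (N : PNN I O A) (S : Finset (O ⊕ A)) (σ : Finset I)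
    (y : O ⊕ A) : ℝ :=
  (∑ i ∈ σ, N.W (Sum.inl i) y) + ∑ a : A, if Sum.inr a ∈ S then N.W (Sum.inr a) y else 0

/-- The target set of the transition from source set `S` reading input symbol `σ`:
all neurons whose total incoming weight reaches the firing threshold `1`. -/
noncomputable def PNN.step (N : PNN I O A) (S : Finset (O ⊕ A)) (σ : Finset I) :
    Finset (O ⊕ A) :=
  Finset.univ.filter (fun y => 1 ≤ N.inWeight S σ y)

/-- The set of activated neurons after running `N` on input string `α`, starting from
the empty activation set. -/
noncomputable def PNN.run (N : PNN I O A) (α : List (Finset I)) : Finset (O ⊕ A) :=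
  α.foldl N.step ∅

/-- The output of `N` on input string `α`: the activated output neurons after the run. -/
noncomputable def PNN.out (N : PNN I O A) (α : List (Finset I)) : Finset O :=
  Finset.univ.filter (fun x => Sum.inl x ∈ N.run α)

/-- `Embeds α β` : the pattern `β` occurs, symbolwise as subsets, at the end of `α`. -/
def Embeds {I : Type} (α β : List (Finset I)) : Prop :=
  ∃ γ, γ <:+ α ∧ List.Forall₂ (· ⊆ ·) β γ

/-! A single step from the empty activation set fires the output neuron `x` exactly on the
symbols `σ` with `∑ i ∈ σ, W i x ≥ 1`. Pick `y ∈ σ₁`, `z ∈ σ₂`. If `W y x + W z x ≥ 1`, the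
symbol `{y, z}` fires `x` although it contains neither `σ₁` nor `σ₂` (both have a second
element). Otherwise the weights of `σ₁ \ {y}` and `σ₂ \ {z}` add up to more than `1`, so
their union fires `x` while missing `y` and `z`. -/

theorem embeds_singleton_iff {I : Type} {τ σ : Finset I} : Embeds [τ] [σ] ↔ σ ⊆ τ := by
  constructor
  · rintro ⟨γ, hsuf, _ | ⟨hσ, ⟨⟩⟩⟩
    obtain rfl : _ = τ := List.head_eq_of_cons_eq (hsuf.eq_of_length rfl)
    exact hσ
  · exact fun h => ⟨[τ], List.suffix_refl _, .cons h .nil⟩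

theorem PNN.mem_out_singleton (N : PNN I O A) (σ : Finset I) (x : O) :
    x ∈ N.out [σ] ↔ 1 ≤ ∑ i ∈ σ, N.W (Sum.inl i) (Sum.inl x) := by
  simp [PNN.out, PNN.run, PNN.step, PNN.inWeight]

section Combinatorics

variable {ι : Type} [DecidableEq ι] {σ₁ σ₂ : Finset ι}

theorem Finset.not_subset_pair_of_two_le_card {σ : Finset ι} {y z : ι} (hσ : 2 ≤ σ.card)
    (hz : z ∉ σ) : ¬ σ ⊆ {y, z} := by
  intro hsub
  have : σ ⊆ {y} := fun a ha => by
    rcases Finset.mem_insert.mp (hsub ha) with rfl | hza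
    · exact Finset.mem_singleton_self a
    · exact absurd (Finset.mem_singleton.mp hza ▸ ha) hz
  have := Finset.card_le_card this
  simp only [Finset.card_singleton] at this
  omega

theorem exists_le_sum_not_superset (hdisj : Disjoint σ₁ σ₂) (h₁ : 2 ≤ σ₁.card)
    (h₂ : 2 ≤ σ₂.card) {w : ι → ℝ} {t : ℝ} (hw₁ : t ≤ ∑ i ∈ σ₁, w i)
    (hw₂ : t ≤ ∑ i ∈ σ₂, w i) :
    ∃ τ : Finset ι, t ≤ ∑ i ∈ τ, w i ∧ ¬ σ₁ ⊆ τ ∧ ¬ σ₂ ⊆ τ := by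
  obtain ⟨y, hy⟩ := Finset.card_pos.mp (by omega : 0 < σ₁.card)
  obtain ⟨z, hz⟩ := Finset.card_pos.mp (by omega : 0 < σ₂.card)
  have hyσ₂ : y ∉ σ₂ := Finset.disjoint_left.mp hdisj hy
  have hzσ₁ : z ∉ σ₁ := Finset.disjoint_right.mp hdisj hz
  by_cases hyz : t ≤ w y + w z
  · refine ⟨{y, z}, ?_, Finset.not_subset_pair_of_two_le_card h₁ hzσ₁, ?_⟩
    · rwa [Finset.sum_pair (ne_of_mem_of_not_mem hy hzσ₁)]
    · rw [Finset.pair_comm]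
      exact Finset.not_subset_pair_of_two_le_card h₂ hyσ₂
  · refine ⟨σ₁.erase y ∪ σ₂.erase z, ?_, fun h => ?_, fun h => ?_⟩
    · rw [Finset.sum_union (hdisj.mono (Finset.erase_subset _ _) (Finset.erase_subset _ _))]
      have e₁ := Finset.sum_erase_add σ₁ w hy
      have e₂ := Finset.sum_erase_add σ₂ w hz
      linarith
    · simpa [hyσ₂] using h hy
    · simpa [hzσ₁] using h hz

end Combinatorics

theorem stmt_11_general (σ₁ σ₂ : Finset I)
    (hdisj : Disjoint σ₁ σ₂)
    (h1 : 2 ≤ σ₁.card) (h2 : 2 ≤ σ₂.card)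
    (hO : Fintype.card O = 1)
    (N : PNN I O A) :
    ¬ ∀ α : List (Finset I), α ≠ [] →
        N.out α = if Embeds α [σ₁] ∨ Embeds α [σ₂] then Finset.univ else ∅ := by
  intro hN
  obtain ⟨x, -⟩ := Fintype.card_eq_one_iff.mp hO
  have fires (σ : Finset I) :
      1 ≤ ∑ i ∈ σ, N.W (Sum.inl i) (Sum.inl x) ↔ σ₁ ⊆ σ ∨ σ₂ ⊆ σ := by
    rw [← N.mem_out_singleton, hN [σ] (List.cons_ne_nil _ _), embeds_singleton_iff,
      embeds_singleton_iff]
    split_ifs <;> simp_all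
  obtain ⟨τ, hτ, hτ₁, hτ₂⟩ := exists_le_sum_not_superset hdisj h1 h2
    ((fires σ₁).2 (.inl subset_rfl)) ((fires σ₂).2 (.inr subset_rfl))
  exact not_or.2 ⟨hτ₁, hτ₂⟩ ((fires τ).1 hτ)

/-- Let `I` be partitioned into disjoint sets `σ₁`, `σ₂`, each of size at least two, and
let `B` be the monotone-regular behavior with single output neuron defined by the founded
regular language `{⟨σ₁⟩, ⟨σ₂⟩}`. Then no positive neural network implements `B` with zero
delay. -/
theorem stmt_11 [DecidableEq I] (σ₁ σ₂ : Finset I)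
    (hdisj : Disjoint σ₁ σ₂) (hunion : σ₁ ∪ σ₂ = Finset.univ)
    (h1 : 2 ≤ σ₁.card) (h2 : 2 ≤ σ₂.card)
    (hO : Fintype.card O = 1)
    (N : PNN I O A) :
    ¬ ∀ α : List (Finset I), α ≠ [] →
        N.out α = if Embeds α [σ₁] ∨ Embeds α [σ₂] then Finset.univ else ∅ :=
  stmt_11_general σ₁ σ₂ hdisj h1 h2 hO N
end

section
/- Let σ₁,σ₂,σ₃,σ₄ be nonempty pairwise disjoint sets of input neurons, I their union, and B the monotone-regular behavior with single output x defined by the language L = {⟨σ₁,σ₂⟩, ⟨σ₃,σ₄⟩} (x ∈ B(α) iff α embeds ⟨σ₁,σ₂⟩ or ⟨σ₃,σ₄⟩). Then no positive neural network implements B with zero delay. -/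
open scoped Classical

variable {I O A : Type} [Fintype I] [Fintype O] [Fintype A]

/-
On a two-letter input ⟨a, b⟩ the output neuron `x` fires iff `u(a) + v(b) ≥ 1`, where `u(a)` is
the weight reaching `x` from the auxiliary neurons activated by `a` and `v(b)` the weight from
the inputs in `b`. If `u(σ₁) + v(σ₂) ≥ 1` and `u(σ₃) + v(σ₄) ≥ 1`, then summing shows
`u(σ₁) + v(σ₄) ≥ 1` or `u(σ₃) + v(σ₂) ≥ 1`, so `x` also fires on ⟨σ₁, σ₄⟩ or ⟨σ₃, σ₂⟩; by
disjointness and nonemptiness neither of these embeds a word of the language.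
-/

theorem embeds_refl {I : Type} (α : List (Finset I)) : Embeds α α :=
  ⟨α, List.suffix_refl α, List.forall₂_same.2 fun _ _ => subset_rfl⟩

theorem embeds_pair_iff {I : Type} {a b c d : Finset I} :
    Embeds [a, b] [c, d] ↔ c ⊆ a ∧ d ⊆ b := by
  constructor
  · rintro ⟨γ, hsuf, hγ⟩
    obtain rfl : γ = [a, b] := hsuf.eq_of_length (by simpa using hγ.length_eq.symm)
    simpa using hγ
  · rintro ⟨hca, hdb⟩
    exact ⟨[a, b], List.suffix_refl _, by simpa using ⟨hca, hdb⟩⟩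

theorem Finset.Nonempty.not_subset_of_disjoint {α : Type*} {s t : Finset α} (hs : s.Nonempty)
    (hst : Disjoint s t) : ¬ s ⊆ t :=
  fun h => hs.ne_empty (hst.eq_bot_of_le h)

namespace PNN

theorem mem_out_pair (N : PNN I O A) (x : O) (a b : Finset I) :
    x ∈ N.out [a, b] ↔ 1 ≤ N.inWeight (N.step ∅ a) b (Sum.inl x) := by
  simp [out, run, step]

theorem inWeight_add_inWeight_swap (N : PNN I O A) (S T : Finset (O ⊕ A)) (σ τ : Finset I)
    (y : O ⊕ A) :
    N.inWeight S σ y + N.inWeight T τ y = N.inWeight S τ y + N.inWeight T σ y := by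
  simp only [inWeight]
  ring

theorem mem_out_pair_swap (N : PNN I O A) (x : O) {a b c d : Finset I}
    (hab : x ∈ N.out [a, b]) (hcd : x ∈ N.out [c, d]) :
    x ∈ N.out [a, d] ∨ x ∈ N.out [c, b] := by
  simp only [mem_out_pair] at *
  by_contra! h
  linarith [N.inWeight_add_inWeight_swap (N.step ∅ a) (N.step ∅ c) b d (Sum.inl x)]

end PNN

theorem stmt_13_general (σ₁ σ₂ σ₃ σ₄ : Finset I)
    (hne₁ : σ₁.Nonempty) (hne₂ : σ₂.Nonempty) (hne₃ : σ₃.Nonempty) (hne₄ : σ₄.Nonempty)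
    (hdisj : Pairwise fun i j => Disjoint (![σ₁, σ₂, σ₃, σ₄] i) (![σ₁, σ₂, σ₃, σ₄] j))
    (hO : Fintype.card O = 1)
    (N : PNN I O A) :
    ¬ ∀ α : List (Finset I), α ≠ [] →
        N.out α = if Embeds α [σ₁, σ₂] ∨ Embeds α [σ₃, σ₄] then Finset.univ else ∅ := by
  intro h
  obtain ⟨x, -⟩ := Fintype.card_eq_one_iff.mp hO
  have hmem (a b : Finset I) :
      x ∈ N.out [a, b] ↔ Embeds [a, b] [σ₁, σ₂] ∨ Embeds [a, b] [σ₃, σ₄] := by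
    rw [h _ (List.cons_ne_nil _ _)]
    split_ifs with hw <;> simpa using hw
  have h₁₃ : Disjoint σ₁ σ₃ := hdisj (show (0 : Fin 4) ≠ 2 by decide)
  have h₂₄ : Disjoint σ₂ σ₄ := hdisj (show (1 : Fin 4) ≠ 3 by decide)
  have hcross := N.mem_out_pair_swap x ((hmem σ₁ σ₂).2 (.inl (embeds_refl _)))
    ((hmem σ₃ σ₄).2 (.inr (embeds_refl _)))
  simp only [hmem, embeds_pair_iff, subset_rfl, and_true, true_and] at hcross
  rcases hcross with (h₂ | h₃) | (h₁ | h₄)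
  · exact hne₂.not_subset_of_disjoint h₂₄ h₂
  · exact hne₃.not_subset_of_disjoint h₁₃.symm h₃
  · exact hne₁.not_subset_of_disjoint h₁₃ h₁
  · exact hne₄.not_subset_of_disjoint h₂₄.symm h₄

/-- Let `σ₁, σ₂, σ₃, σ₄` be nonempty pairwise disjoint sets of input neurons covering `I`,
and let `B` be the monotone-regular behavior with single output neuron defined by the
founded regular language `{⟨σ₁,σ₂⟩, ⟨σ₃,σ₄⟩}`. Then no positive neural network implements
`B` with zero delay. -/
theorem stmt_13 [DecidableEq I] (σ₁ σ₂ σ₃ σ₄ : Finset I)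
    (hne₁ : σ₁.Nonempty) (hne₂ : σ₂.Nonempty) (hne₃ : σ₃.Nonempty) (hne₄ : σ₄.Nonempty)
    (hdisj : Pairwise fun i j => Disjoint (![σ₁, σ₂, σ₃, σ₄] i) (![σ₁, σ₂, σ₃, σ₄] j))
    (hunion : σ₁ ∪ σ₂ ∪ σ₃ ∪ σ₄ = Finset.univ)
    (hO : Fintype.card O = 1)
    (N : PNN I O A) :
    ¬ ∀ α : List (Finset I), α ≠ [] →
        N.out α = if Embeds α [σ₁, σ₂] ∨ Embeds α [σ₃, σ₄] then Finset.univ else ∅ :=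
  stmt_13_general σ₁ σ₂ σ₃ σ₄ hne₁ hne₂ hne₃ hne₄ hdisj hO N
end
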